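/- Let E > 0, ε > 0 and p_f ∈ (0,1). Let p : ℂ → ℝ be a measurable probability density with respect to Lebesgue measure on ℂ ≅ ℝ² (p ≥ 0, ∫_ℂ p = 1) with p(α) ≤ 1/π for all α and ∫_ℂ 2|α|²·p(α) dα ≤ E, and let S > 0. Let R > 0 and L ≥ 1 satisfy R² ≥ E/ε and L ≥ 4πR²/(ε²·p_f). Let X₁, …, X_L be independent real random variables, each distributed as the pushforward of the uniform probability measure μ_R on the closed ball B_R(0) ⊆ ℂ under the map α ↦ R²·π·S·p(α), and let X̄ = (1/L)·Σ_{j=1}^L X_j. Then Pr[ (1−ε)·S ≤ X̄ ≤ (1+ε)·S ] ≥ 1 − p_f. -/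

import Mathlib

open MeasureTheory ProbabilityTheory

set_option maxHeartbeats 1000000 in
/-- **Success guarantee of the fast norm-estimation procedure (single-mode core).**
Let `p` be a probability density on `ℂ` with `p ≤ 1/π` and energy `∫2|α|²p ≤ E`,
`S > 0`, and choose `R² ≥ E/ε`, `L ≥ 4πR²/(ε²·p_f)`. For i.i.d. samples
`X_j` of `α ↦ R²·π·S·p(α)` with `α` uniform on the closed ball of radius `R`,
the empirical mean `X̄` satisfies `(1−ε)S ≤ X̄ ≤ (1+ε)S` with probability `≥ 1 − p_f`. -/
theorem fastnorm_success_probability {Ω : Type*} [MeasurableSpace Ω]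
    (P : Measure Ω) [IsProbabilityMeasure P]
    (E ε pf S : ℝ) (hE : 0 < E) (hε : 0 < ε) (hpf0 : 0 < pf) (hpf1 : pf < 1)
    (hS : 0 < S)
    (p : ℂ → ℝ) (hp_meas : Measurable p) (hp_nonneg : ∀ α, 0 ≤ p α)
    (hp_int : Integrable p) (hp_prob : ∫ α : ℂ, p α = 1)
    (hp_bound : ∀ α, p α ≤ 1 / Real.pi)
    (henergy_int : Integrable (fun α : ℂ => 2 * ‖α‖ ^ 2 * p α))
    (henergy : ∫ α : ℂ, 2 * ‖α‖ ^ 2 * p α ≤ E)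
    (R : ℝ) (hR : 0 < R) (hR2 : E / ε ≤ R ^ 2)
    (L : ℕ) (hL : 1 ≤ L) (hLbig : 4 * Real.pi * R ^ 2 / (ε ^ 2 * pf) ≤ (L : ℝ))
    (μR : Measure ℂ)
    (hμR : μR = (volume (Metric.closedBall (0 : ℂ) R))⁻¹
      • volume.restrict (Metric.closedBall (0 : ℂ) R))
    (X : Fin L → Ω → ℝ) (hX_meas : ∀ j, Measurable (X j))
    (hindep : iIndepFun X P)
    (hdist : ∀ j, Measure.map (X j) P
      = Measure.map (fun α : ℂ => R ^ 2 * Real.pi * S * p α) μR) :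
    ENNReal.ofReal (1 - pf)
      ≤ P {ω | (1 - ε) * S ≤ (1 / (L : ℝ)) * ∑ j, X j ω
            ∧ (1 / (L : ℝ)) * ∑ j, X j ω ≤ (1 + ε) * S} := by
  have hπ : (0:ℝ) < Real.pi := Real.pi_pos
  have hπ1 : (1:ℝ) ≤ Real.pi := by linarith [Real.pi_gt_three]
  set B : Set ℂ := Metric.closedBall (0 : ℂ) R with hBdef
  have hBmeas : MeasurableSet B := measurableSet_closedBall
  have hvolB : volume B = ENNReal.ofReal (Real.pi * R ^ 2) := by
    rw [hBdef, Complex.volume_closedBall, ← ENNReal.ofReal_pow hR.le,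
      ← ENNReal.ofReal_coe_nnreal, ← ENNReal.ofReal_mul (by positivity)]
    norm_num [NNReal.coe_real_pi, mul_comm]
  set f : ℂ → ℝ := fun α => R ^ 2 * Real.pi * S * p α with hfdef
  have hf_meas : Measurable f := (hp_meas.const_mul _)
  have hf_nonneg : ∀ α, 0 ≤ f α := fun α => by
    have := hp_nonneg α; positivity
  have hf_ub : ∀ α, f α ≤ R ^ 2 * S := by
    intro α
    have h1 : p α ≤ 1 / Real.pi := hp_bound α
    have h2 : R ^ 2 * Real.pi * S * p α ≤ R ^ 2 * Real.pi * S * (1 / Real.pi) := by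
      have : (0:ℝ) ≤ R ^ 2 * Real.pi * S := by positivity
      exact mul_le_mul_of_nonneg_left h1 this
    calc f α ≤ R ^ 2 * Real.pi * S * (1 / Real.pi) := h2
      _ = R ^ 2 * S := by field_simp
  -- a.e. bound on the X j
  have haebound : ∀ j, ∀ᵐ ω ∂P, X j ω ∈ Set.Icc (0:ℝ) (R ^ 2 * S) := by
    intro j
    rw [ae_iff]
    have hset : {ω | X j ω ∉ Set.Icc (0:ℝ) (R ^ 2 * S)}
        = X j ⁻¹' (Set.Icc (0:ℝ) (R ^ 2 * S))ᶜ := rfl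
    rw [hset, ← Measure.map_apply (hX_meas j) measurableSet_Icc.compl, hdist j,
      Measure.map_apply hf_meas measurableSet_Icc.compl]
    have : f ⁻¹' (Set.Icc (0:ℝ) (R ^ 2 * S))ᶜ = ∅ := by
      ext α
      simp only [Set.mem_preimage, Set.mem_compl_iff, Set.mem_Icc, Set.mem_empty_iff_false,
        iff_false, not_not]
      exact ⟨hf_nonneg α, hf_ub α⟩
    simp [this]
  have hmem : ∀ j, MemLp (X j) 2 P := by
    intro j
    refine MemLp.of_bound (hX_meas j).aestronglyMeasurable (R ^ 2 * S)
      ((haebound j).mono fun ω h => ?_)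
    rw [Real.norm_eq_abs, abs_of_nonneg h.1]
    exact h.2
  -- the set-integral of p over B
  set I : ℝ := ∫ α in B, p α with hIdef
  have hI_le : I ≤ 1 := by
    rw [← hp_prob]
    exact setIntegral_le_integral hp_int (Filter.Eventually.of_forall hp_nonneg)
  have htail : ∫ α in Bᶜ, p α ≤ E / (2 * R ^ 2) := by
    have hmono : ∫ α in Bᶜ, p α
        ≤ ∫ α in Bᶜ, (1 / (2 * R ^ 2)) * (2 * ‖α‖ ^ 2 * p α) := by
      refine setIntegral_mono_on hp_int.integrableOn
        (henergy_int.integrableOn.const_mul _) hBmeas.compl ?_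
      intro α hα
      have hαR : R < ‖α‖ := by
        simpa [hBdef, Complex.dist_eq] using hα
      have hR2α : R ^ 2 ≤ ‖α‖ ^ 2 := by nlinarith
      have hpα := hp_nonneg α
      have hR2pos : (0:ℝ) < R ^ 2 := by positivity
      rw [div_mul_eq_mul_div, one_mul, le_div_iff₀ (by positivity)]
      nlinarith
    have hEner : ∫ α in Bᶜ, 2 * ‖α‖ ^ 2 * p α ≤ E := by
      refine le_trans (setIntegral_le_integral henergy_int
        (Filter.Eventually.of_forall fun α => ?_)) henergy
      have := hp_nonneg α; positivity
    calc ∫ α in Bᶜ, p α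
        ≤ ∫ α in Bᶜ, (1 / (2 * R ^ 2)) * (2 * ‖α‖ ^ 2 * p α) := hmono
      _ = (1 / (2 * R ^ 2)) * ∫ α in Bᶜ, 2 * ‖α‖ ^ 2 * p α := integral_const_mul _ _
      _ ≤ (1 / (2 * R ^ 2)) * E := by
          have : (0:ℝ) ≤ 1 / (2 * R ^ 2) := by positivity
          exact mul_le_mul_of_nonneg_left hEner this
      _ = E / (2 * R ^ 2) := by ring
  have hI_ge : 1 - ε / 2 ≤ I := by
    have hsplit : I + ∫ α in Bᶜ, p α = 1 := by
      rw [hIdef, ← hp_prob]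
      exact integral_add_compl hBmeas hp_int
    have hER : E / (2 * R ^ 2) ≤ ε / 2 := by
      have hEεR : E ≤ R ^ 2 * ε := (div_le_iff₀ hε).mp hR2
      rw [div_le_div_iff₀ (by positivity) (by norm_num)]
      nlinarith
    linarith [htail]
  -- mean of each X j
  have hvolB_ne : volume B ≠ 0 := by rw [hvolB]; positivity
  have hvolB_top : volume B ≠ ⊤ := by rw [hvolB]; exact ENNReal.ofReal_ne_top
  have hmean : ∀ j, P[X j] = S * I := by
    intro j
    have h1 : P[X j] = ∫ x, x ∂(Measure.map (X j) P) :=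
      (integral_map (hX_meas j).aemeasurable aestronglyMeasurable_id).symm
    rw [h1, hdist j,
      show (∫ x, x ∂(Measure.map f μR)) = ∫ α, f α ∂μR from
        integral_map hf_meas.aemeasurable aestronglyMeasurable_id,
      hμR, integral_smul_measure, smul_eq_mul, hvolB,
      ← ENNReal.ofReal_inv_of_pos (by positivity), ENNReal.toReal_ofReal (by positivity),
      show (∫ α in B, f α) = R ^ 2 * Real.pi * S * I from integral_const_mul _ _]
    field_simp
  have hm_le : S * I ≤ S := by nlinarith
  have hm_ge : S * (1 - ε / 2) ≤ S * I := by nlinarith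
  -- sum
  have hSum_mem : MemLp (∑ i, X i) 2 P := memLp_finset_sum' _ fun i _ => hmem i
  have hSum_int : ∀ i : Fin L, Integrable (X i) P := fun i => (hmem i).integrable one_le_two
  have hSum_mean : P[∑ i, X i] = (L : ℝ) * (S * I) := by
    have h1 : (∑ i, X i) = fun ω => ∑ i, X i ω := by
      ext ω; simp [Finset.sum_apply]
    rw [h1, integral_finset_sum _ fun i _ => hSum_int i]
    simp [hmean]
  -- variance bound
  have hLpos : (0:ℝ) < L := by exact_mod_cast hL
  have hvar_each : ∀ i : Fin L, variance (X i) P ≤ R ^ 2 * S ^ 2 := by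
    intro i
    have h1 : variance (X i) P ≤ P[X i ^ 2] :=
      variance_le_expectation_sq (hX_meas i).aestronglyMeasurable
    have h2 : P[X i ^ 2] ≤ ∫ ω, R ^ 2 * S * X i ω ∂P := by
      refine integral_mono_ae (hmem i).integrable_sq ((hSum_int i).const_mul _)
        ((haebound i).mono fun ω h => ?_)
      simp only [Pi.pow_apply]
      nlinarith [h.1, h.2]
    have h3 : ∫ ω, R ^ 2 * S * X i ω ∂P = R ^ 2 * S * (S * I) := by
      rw [integral_const_mul, hmean i]
    rw [h3] at h2
    nlinarith [h1, h2, hI_le, sq_nonneg (R * S)]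
  have hvar_sum : variance (∑ i, X i) P ≤ (L : ℝ) * (R ^ 2 * S ^ 2) := by
    rw [IndepFun.variance_sum (fun i _ => hmem i)
      (fun i _ j _ hij => hindep.indepFun hij)]
    calc ∑ i : Fin L, variance (X i) P ≤ ∑ _i : Fin L, R ^ 2 * S ^ 2 :=
          Finset.sum_le_sum fun i _ => hvar_each i
      _ = (L : ℝ) * (R ^ 2 * S ^ 2) := by simp [mul_comm]
  -- Chebyshev
  set c : ℝ := (L : ℝ) * (ε * S / 2) with hcdef
  have hc : 0 < c := by positivity
  have hcheb := meas_ge_le_variance_div_sq (μ := P) hSum_mem hc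
  have hratio : variance (∑ i, X i) P / c ^ 2 ≤ pf := by
    have hvnn : 0 ≤ variance (∑ i, X i) P := variance_nonneg _ _
    have hc2 : (0:ℝ) < c ^ 2 := by positivity
    rw [div_le_iff₀ hc2]
    have hkey : 4 * R ^ 2 ≤ (L:ℝ) * (ε ^ 2 * pf) := by
      have h1 : 4 * Real.pi * R ^ 2 ≤ (L:ℝ) * (ε ^ 2 * pf) := by
        rw [div_le_iff₀ (by positivity)] at hLbig
        linarith
      nlinarith
    have : (L:ℝ) * (R ^ 2 * S ^ 2) ≤ pf * c ^ 2 := by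
      rw [hcdef]
      have hc2eq : ((L:ℝ) * (ε * S / 2)) ^ 2 = (L:ℝ)^2 * ε^2 * S^2 / 4 := by ring
      rw [hc2eq]
      have : 4 * R ^ 2 * (L:ℝ) ≤ (L:ℝ) * (ε ^ 2 * pf) * (L:ℝ) := by nlinarith
      nlinarith
    linarith [hvar_sum]
  have hcheb' : P {ω | c ≤ |(∑ i, X i) ω - P[∑ i, X i]|} ≤ ENNReal.ofReal pf :=
    le_trans hcheb (ENNReal.ofReal_le_ofReal hratio)
  -- event inclusion
  set D : Set Ω := {ω | c ≤ |(∑ i, X i) ω - P[∑ i, X i]|} with hDdef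
  have hD_meas : MeasurableSet D := by
    have hSmeas : Measurable fun ω => (∑ i, X i) ω := by
      simp only [Finset.sum_apply]
      exact Finset.measurable_sum _ fun i _ => hX_meas i
    exact measurableSet_le measurable_const ((hSmeas.sub measurable_const).abs)
  have hsubset : Dᶜ ⊆ {ω | (1 - ε) * S ≤ (1 / (L : ℝ)) * ∑ j, X j ω
      ∧ (1 / (L : ℝ)) * ∑ j, X j ω ≤ (1 + ε) * S} := by
    intro ω hω
    simp only [hDdef, Set.mem_compl_iff, Set.mem_setOf_eq, not_le] at hω
    rw [hSum_mean] at hω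
    have habs := abs_lt.mp hω
    have hsum_apply : (∑ i, X i) ω = ∑ j, X j ω := by simp [Finset.sum_apply]
    rw [hsum_apply] at habs
    have hm1 := hm_le
    have hm2 := hm_ge
    constructor
    · rw [hcdef] at habs
      have h1 : (∑ j, X j ω) > (L:ℝ) * (S * I) - (L:ℝ) * (ε * S / 2) := by linarith [habs.1]
      have h2 : (1 / (L:ℝ)) * ∑ j, X j ω > S * I - ε * S / 2 := by
        have := mul_lt_mul_of_pos_left h1 (by positivity : (0:ℝ) < 1 / (L:ℝ))
        calc (1 / (L:ℝ)) * ∑ j, X j ω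
            > (1 / (L:ℝ)) * ((L:ℝ) * (S * I) - (L:ℝ) * (ε * S / 2)) := this
          _ = S * I - ε * S / 2 := by field_simp
      nlinarith
    · rw [hcdef] at habs
      have h1 : (∑ j, X j ω) < (L:ℝ) * (S * I) + (L:ℝ) * (ε * S / 2) := by linarith [habs.2]
      have h2 : (1 / (L:ℝ)) * ∑ j, X j ω < S * I + ε * S / 2 := by
        have := mul_lt_mul_of_pos_left h1 (by positivity : (0:ℝ) < 1 / (L:ℝ))
        calc (1 / (L:ℝ)) * ∑ j, X j ω
            < (1 / (L:ℝ)) * ((L:ℝ) * (S * I) + (L:ℝ) * (ε * S / 2)) := this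
          _ = S * I + ε * S / 2 := by field_simp
      nlinarith
  calc ENNReal.ofReal (1 - pf) = 1 - ENNReal.ofReal pf := by
        rw [ENNReal.ofReal_sub _ hpf0.le, ENNReal.ofReal_one]
    _ ≤ 1 - P D := tsub_le_tsub_left hcheb' 1
    _ = P Dᶜ := (prob_compl_eq_one_sub hD_meas).symm
    _ ≤ P _ := measure_mono hsubset
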